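/- Let g(q₂,q₃,q₄) = cos(q₂) + cos(q₂+q₃) + cos(q₃+q₄) + cos(q₄) on 𝕋³. Then the critical point set of g consists exactly of: the two isolated points (0,0,0) and (π,0,π), and the three one-parameter families P₁(ϑ) = (ϑ, π, -ϑ), P₂(ϑ) = (ϑ, π, ϑ+π), P₃(ϑ) = (ϑ, -2ϑ, ϑ+π), ϑ ∈ 𝕋. -/

import Mathlib

/-!
On the circle `ℝ/2πℤ` each partial derivative of `g` is minus a sum of two sines, and
`sin x + sin y = 0` exactly when `x = -y` or `x - y = π`. The critical point equations thus become
three pairs of linear alternatives in `Real.Angle`. Solving them is linear elimination except for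
halving: `2 • x = 2 • y` only gives `x = y` or `x = y + π`, and this ambiguity is what produces
the two isolated points besides the three families.
-/

open Real

/-- Equality of angles on the circle `ℝ/2πℤ`. -/
def AngleEq (x y : ℝ) : Prop := ∃ k : ℤ, x = y + 2 * π * k

theorem angleEq_iff_coe_eq {x y : ℝ} : AngleEq x y ↔ (x : Angle) = y := by
  rw [Angle.angle_eq_iff_two_pi_dvd_sub, AngleEq]
  exact exists_congr fun k => by constructor <;> intro h <;> linarith

namespace Real.Angle

theorem sin_add_sin_eq_zero_iff {θ ψ : Angle} :
    sin θ + sin ψ = 0 ↔ θ = -ψ ∨ θ - ψ = π := by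
  rw [add_eq_zero_iff_eq_neg, ← sin_neg, sin_eq_iff_eq_or_add_eq_pi, sub_eq_add_neg]

theorem sin_add_sin_add_eq_zero_iff {θ ψ : Angle} :
    sin θ + sin (θ + ψ) = 0 ↔ ψ = -(2 • θ) ∨ ψ = π := by
  rw [sin_add_sin_eq_zero_iff, eq_neg_iff_add_eq_zero, eq_neg_iff_add_eq_zero,
    show θ + (θ + ψ) = ψ + 2 • θ by abel, sub_add_cancel_left, neg_eq_iff_eq_neg, neg_coe_pi]

theorem sin_add_add_sin_add_eq_zero_iff {θ φ ψ : Angle} :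
    sin (θ + φ) + sin (φ + ψ) = 0 ↔ θ + 2 • φ + ψ = 0 ∨ ψ = θ + π := by
  rw [sin_add_sin_eq_zero_iff, eq_neg_iff_add_eq_zero,
    show θ + φ + (φ + ψ) = θ + 2 • φ + ψ by abel, show θ + φ - (φ + ψ) = θ - ψ by abel,
    ← neg_sub ψ θ, neg_eq_iff_eq_neg, neg_coe_pi, sub_eq_iff_eq_add']

theorem sin_add_sin_chain_eq_zero_iff (a b c : Angle) :
    (sin a + sin (a + b) = 0 ∧ sin (a + b) + sin (b + c) = 0 ∧ sin (b + c) + sin c = 0) ↔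
      (a = 0 ∧ b = 0 ∧ c = 0) ∨ (a = π ∧ b = 0 ∧ c = π) ∨ (b = π ∧ c = -a) ∨
        (b = π ∧ c = a + π) ∨ (b = -(2 • a) ∧ c = a + π) := by
  rw [add_comm (sin (b + c)), add_comm b c, sin_add_sin_add_eq_zero_iff,
    sin_add_sin_add_eq_zero_iff, add_comm c b, sin_add_add_sin_add_eq_zero_iff]
  constructor
  · rintro ⟨hab, hb_mid, hcb⟩
    rcases eq_or_ne b π with rfl | hb
    · rcases hb_mid with hac | rfl
      · rw [two_nsmul_coe_pi, add_zero] at hac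
        exact Or.inr (Or.inr (Or.inl ⟨rfl, (neg_eq_of_add_eq_zero_right hac).symm⟩))
      · exact Or.inr (Or.inr (Or.inr (Or.inl ⟨rfl, rfl⟩)))
    obtain rfl := hab.resolve_right hb
    have h2c : 2 • c = 2 • a := (neg_inj.mp (hcb.resolve_right hb)).symm
    rcases hb_mid with hac | rfl
    · rcases two_nsmul_eq_iff.mp h2c with rfl | rfl
      · have h2c_zero : 2 • c = 0 := by rw [← neg_eq_zero, ← hac]; abel
        rw [h2c_zero, neg_zero]
        rcases two_nsmul_eq_zero_iff.mp h2c_zero with rfl | rfl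
        · exact Or.inl ⟨rfl, rfl, rfl⟩
        · exact Or.inr (Or.inl ⟨rfl, rfl, rfl⟩)
      · exact Or.inr (Or.inr (Or.inr (Or.inr ⟨rfl, rfl⟩)))
    · exact Or.inr (Or.inr (Or.inr (Or.inr ⟨rfl, rfl⟩)))
  · rintro (⟨rfl, rfl, rfl⟩ | ⟨rfl, rfl, rfl⟩ | ⟨rfl, rfl⟩ | ⟨rfl, rfl⟩ | ⟨rfl, rfl⟩)
    · simp
    · simp [coe_pi_add_coe_pi]
    · exact ⟨Or.inr rfl, Or.inl (by rw [two_nsmul_coe_pi]; abel), Or.inr rfl⟩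
    · exact ⟨Or.inr rfl, Or.inr rfl, Or.inr rfl⟩
    · exact ⟨Or.inl rfl, Or.inr rfl,
        Or.inl (by rw [smul_add, two_nsmul_coe_pi, add_zero])⟩

end Real.Angle

/-- The critical points of
`g(q₂,q₃,q₄) = cos q₂ + cos(q₂+q₃) + cos(q₃+q₄) + cos q₄` on `𝕋³` are exactly:
the two isolated points `(0,0,0)` and `(π,0,π)`, and the three one-parameter
families `P₁(ϑ) = (ϑ, π, -ϑ)`, `P₂(ϑ) = (ϑ, π, ϑ+π)`, `P₃(ϑ) = (ϑ, -2ϑ, ϑ+π)`. -/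
theorem stmt7 (g : ℝ → ℝ → ℝ → ℝ)
    (hg : ∀ q₂ q₃ q₄, g q₂ q₃ q₄ =
      Real.cos q₂ + Real.cos (q₂ + q₃) + Real.cos (q₃ + q₄) + Real.cos q₄)
    (q₂ q₃ q₄ : ℝ) :
    (deriv (fun x => g x q₃ q₄) q₂ = 0 ∧
     deriv (fun y => g q₂ y q₄) q₃ = 0 ∧
     deriv (fun z => g q₂ q₃ z) q₄ = 0) ↔
    ((AngleEq q₂ 0 ∧ AngleEq q₃ 0 ∧ AngleEq q₄ 0) ∨
     (AngleEq q₂ π ∧ AngleEq q₃ 0 ∧ AngleEq q₄ π) ∨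
     (AngleEq q₃ π ∧ AngleEq q₄ (-q₂)) ∨
     (AngleEq q₃ π ∧ AngleEq q₄ (q₂ + π)) ∨
     (AngleEq q₃ (-2 * q₂) ∧ AngleEq q₄ (q₂ + π))) := by
  have hd₂ : deriv (fun x => g x q₃ q₄) q₂ = -(sin q₂ + sin (q₂ + q₃)) := by
    simp (disch := fun_prop) [hg]; ring
  have hd₃ : deriv (fun y => g q₂ y q₄) q₃ = -(sin (q₂ + q₃) + sin (q₃ + q₄)) := by
    simp (disch := fun_prop) [hg]; ring
  have hd₄ : deriv (fun z => g q₂ q₃ z) q₄ = -(sin (q₃ + q₄) + sin q₄) := by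
    simp (disch := fun_prop) [hg]; ring
  have h2q₂ : ((-2 * q₂ : ℝ) : Angle) = -(2 • (q₂ : Angle)) := by
    rw [← Angle.coe_nsmul, ← Angle.coe_neg, two_nsmul, neg_mul, two_mul]
  simp only [hd₂, hd₃, hd₄, neg_eq_zero, ← Angle.sin_coe, Angle.coe_add, angleEq_iff_coe_eq,
    h2q₂, Angle.coe_neg, Angle.coe_zero]
  exact Angle.sin_add_sin_chain_eq_zero_iff _ _ _
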